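/- The global function f_X of the sand automaton X is F-injective: any two distinct finite configurations have distinct images under f_X. -/

import Mathlib

/-
The rule of `X` only looks at the two left neighbours of a cell. With those fixed, raising the
height of the cell from `n` to `n + 1` lowers both measured differences by one, and one checks on
the table of `λ_X` that if it returns `-1` at height `n + 1` then it does so at height `n` too.
Hence `n ↦ n + λ_X` is strictly increasing, the image determines each cell from its two left
neighbours, and two finite configurations with the same image, which agree far to the left,
agree everywhere by induction from the left.
-/

/-- The extended integers `ℤ ∪ {-∞, +∞}`. -/
abbrev EZ : Type := WithBot (WithTop ℤ)

/-- Embedding of `ℤ` into the extended integers. -/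
def finVal (n : ℤ) : EZ := ((n : WithTop ℤ) : EZ)

/-- The integer value of a finite extended integer (`0` on `±∞`). -/
def valZ (x : EZ) : ℤ := WithBot.recBotCoe 0 (fun y => WithTop.recTopCoe 0 id y) x

/-- The measuring device `β_l^m`. -/
noncomputable def beta (l : ℕ) (m : ℤ) (n : EZ) : EZ :=
  if finVal (m + (l : ℤ)) < n then ⊤
  else if n < finVal (m - (l : ℤ)) then ⊥
  else WithBot.map (WithTop.map (fun k => k - m)) n

/-- Reference height: the value of `x` if finite, `0` if `x = ±∞`. -/
def refH (x : EZ) : ℤ := if x = ⊥ ∨ x = ⊤ then 0 else valZ x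

/-- One-dimensional sandpile configurations. -/
abbrev Config : Type := ℤ → EZ

/-- The neighborhood sequence `d_r^i(c)`: the `2r`-tuple of measured differences. -/
noncomputable def nbhd (r : ℕ) (c : Config) (i : ℤ) : Fin (2 * r) → EZ :=
  fun j => beta r (refH (c i))
    (c (i + (if (j : ℕ) < r then ((j : ℕ) : ℤ) - (r : ℤ) else ((j : ℕ) : ℤ) - (r : ℤ) + 1)))

/-- The global function of the sand automaton of radius `r` with local rule `lam`. -/
noncomputable def globalF (r : ℕ) (lam : (Fin (2 * r) → EZ) → ℤ) (c : Config) : Config :=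
  fun i => if c i = ⊥ ∨ c i = ⊤ then c i
    else finVal (valZ (c i) + lam (nbhd r c i))

/-- Finite configurations. -/
def FiniteConf (c : Config) : Prop := ∃ k : ℕ, ∀ i : ℤ, (k : ℤ) ≤ |i| → c i = finVal 0

/-- Periodic configurations. -/
def PeriodicConf (c : Config) : Prop := ∃ p : ℤ, p ≠ 0 ∧ ∀ i : ℤ, c (i + p) = c i


/-- The local rule of the sand automaton `X` (radius 2, arguments `(a,b,x,y)`):
returns `-1` on `(+∞,-,-,-)`, `(2,-,-,-)`, `(1,-1,-,-)`, `(1,-2,-,-)`, `(1,-∞,-,-)`,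
`(0,-2,-,-)`, `(0,-∞,-,-)`, and `0` otherwise. -/
def lamX (v : Fin 4 → EZ) : ℤ :=
  if v 0 = ⊤ ∨ v 0 = finVal 2 then -1
  else if v 0 = finVal 1 ∧ (v 1 = finVal (-1) ∨ v 1 = finVal (-2) ∨ v 1 = ⊥) then -1
  else if v 0 = finVal 0 ∧ (v 1 = finVal (-2) ∨ v 1 = ⊥) then -1
  else 0

namespace EZ

@[simp] lemma finVal_inj {a b : ℤ} : finVal a = finVal b ↔ a = b := by simp [finVal]
@[simp] lemma finVal_le_finVal {a b : ℤ} : finVal a ≤ finVal b ↔ a ≤ b := by simp [finVal]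
@[simp] lemma finVal_lt_finVal {a b : ℤ} : finVal a < finVal b ↔ a < b := by simp [finVal]
@[simp] lemma finVal_ne_bot (n : ℤ) : finVal n ≠ ⊥ := WithBot.coe_ne_bot
@[simp] lemma finVal_ne_top (n : ℤ) : finVal n ≠ ⊤ := by simp [finVal]
@[simp] lemma top_ne_finVal (n : ℤ) : ⊤ ≠ finVal n := (finVal_ne_top n).symm
@[simp] lemma bot_ne_finVal (n : ℤ) : ⊥ ≠ finVal n := (finVal_ne_bot n).symm
@[simp] lemma valZ_finVal (n : ℤ) : valZ (finVal n) = n := rfl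

lemma eq_bot_or_eq_top_or_eq_finVal (x : EZ) : x = ⊥ ∨ x = ⊤ ∨ ∃ n, x = finVal n := by
  induction x using WithBot.recBotCoe with
  | bot => exact .inl rfl
  | coe y =>
    induction y using WithTop.recTopCoe with
    | top => exact .inr (.inl rfl)
    | coe n => exact .inr (.inr ⟨n, rfl⟩)

end EZ

open EZ

lemma beta_finVal (l : ℕ) (m n : ℤ) :
    beta l m (finVal n) = if m + l < n then ⊤ else if n < m - l then ⊥ else finVal (n - m) := by
  simp only [beta, finVal_lt_finVal]; rfl

@[simp] lemma beta_bot (l : ℕ) (m : ℤ) : beta l m ⊥ = ⊥ := by simp [beta]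
@[simp] lemma beta_top (l : ℕ) (m : ℤ) : beta l m ⊤ = ⊤ := by simp [beta]

/-- `λ_X` in absolute heights, at a cell of height `n` with left neighbours `a = c (i - 2)` and
`b = c (i - 1)`. -/
noncomputable def decX (a b : EZ) (n : ℤ) : ℤ :=
  if finVal (n + 2) ≤ a ∨ (a = finVal (n + 1) ∧ b ≤ finVal (n - 1)) ∨
      (a = finVal n ∧ b ≤ finVal (n - 2)) then -1
  else 0

lemma lamX_nbhd (c : Config) (i n : ℤ) (h : c i = finVal n) :
    lamX (nbhd 2 c i) = decX (c (i - 2)) (c (i - 1)) n := by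
  have href : refH (c i) = n := by simp [refH, h]
  have hnbhd0 : nbhd 2 c i 0 = beta 2 n (c (i - 2)) := by simp [nbhd, href, sub_eq_add_neg]
  have hnbhd1 : nbhd 2 c i 1 = beta 2 n (c (i - 1)) := by simp [nbhd, href, sub_eq_add_neg]
  rw [lamX, hnbhd0, hnbhd1]
  rcases eq_bot_or_eq_top_or_eq_finVal (c (i - 2)) with ha | ha | ⟨A, ha⟩ <;> rw [ha] <;>
    rcases eq_bot_or_eq_top_or_eq_finVal (c (i - 1)) with hb | hb | ⟨B, hb⟩ <;> rw [hb] <;>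
    simp [decX, beta_finVal] <;> split_ifs <;> simp_all <;> omega

lemma decX_le_decX_add_one (a b : EZ) (n : ℤ) : decX a b n ≤ decX a b (n + 1) := by
  unfold decX
  split_ifs with hn hn1 hn1 <;> try omega
  refine absurd ?_ hn
  rcases hn1 with h | ⟨rfl, hb⟩ | ⟨rfl, hb⟩
  · exact .inl ((finVal_le_finVal.mpr (by omega)).trans h)
  · exact .inl (finVal_le_finVal.mpr (by omega))
  · exact .inr (.inl ⟨rfl, hb.trans (finVal_le_finVal.mpr (by omega))⟩)

lemma strictMono_add_decX (a b : EZ) : StrictMono fun n => n + decX a b n :=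
  strictMono_int_of_lt_succ fun n => by have := decX_le_decX_add_one a b n; omega

lemma eq_or_exists_finVal_of_globalF_apply_eq {r : ℕ} {lam : (Fin (2 * r) → EZ) → ℤ}
    {c c' : Config} {i : ℤ} (h : globalF r lam c i = globalF r lam c' i) :
    c i = c' i ∨ ∃ n n', c i = finVal n ∧ c' i = finVal n' ∧
      n + lam (nbhd r c i) = n' + lam (nbhd r c' i) := by
  rcases eq_bot_or_eq_top_or_eq_finVal (c i) with hc | hc | ⟨n, hc⟩ <;>
    rcases eq_bot_or_eq_top_or_eq_finVal (c' i) with hc' | hc' | ⟨n', hc'⟩ <;>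
    simp_all [globalF]

lemma eq_of_globalF_lamX_eq {c c' : Config} {i : ℤ} (h₂ : c (i - 2) = c' (i - 2))
    (h₁ : c (i - 1) = c' (i - 1)) (h : globalF 2 lamX c i = globalF 2 lamX c' i) :
    c i = c' i := by
  obtain h | ⟨n, n', hn, hn', h⟩ := eq_or_exists_finVal_of_globalF_apply_eq h
  · exact h
  rw [lamX_nbhd c i n hn, lamX_nbhd c' i n' hn', h₁, h₂] at h
  rw [hn, hn', (strictMono_add_decX _ _).injective h]

lemma FiniteConf.exists_forall_le_eq_zero {c : Config} (hc : FiniteConf c) :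
    ∃ N : ℤ, ∀ i ≤ N, c i = finVal 0 := by
  obtain ⟨k, hk⟩ := hc
  exact ⟨-k, fun i hi => hk i (by have := neg_le_abs i; omega)⟩

/-- `f_X` is `F`-injective: any two distinct finite configurations have distinct
images under `f_X`. -/
theorem X_F_injective :
    Set.InjOn (globalF 2 lamX) {c : Config | FiniteConf c} := by
  intro c hc c' hc' hf
  obtain ⟨N, hN⟩ := FiniteConf.exists_forall_le_eq_zero hc
  obtain ⟨N', hN'⟩ := FiniteConf.exists_forall_le_eq_zero hc'
  funext i
  induction i using Int.strongRec (m := min N N') with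
  | lt i hi => rw [hN i (by omega), hN' i (by omega)]
  | ge i _ ih => exact eq_of_globalF_lamX_eq (ih _ (by omega)) (ih _ (by omega)) (congrFun hf i)
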